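/- arXiv:2007.14890 — 7 statements merged into one kernel-verified Lean document; each statement's English description precedes it below -/
import Mathlib

section
/- Let E be a meet-semilattice with bottom ⊥, B a generalized Boolean algebra, and π : E → B a representation such that π(E) generates B as a generalized Boolean algebra. Let X_π be the set of pairs (e, F) ∈ E × Finset E such that π(e) = ⨆_{f ∈ F} π(f). If φ : E → Bool is an X_π-to-join character of E, then there exists a map ψ : B → Bool which is not identically false and preserves ⊥, binary meets, binary joins and relative complements (an ultra character of B), such that φ = ψ ∘ π. (Lemma 3.5.) -/
/-!
Let `S` (`charFilter π φ`) be the set of `b` lying above some `π x \ ⨆_{y ∈ Y} π y` with `φ x`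
true and `φ` false on the finite set `Y`: the filter of `B` generated by what `φ` prescribes.
It is proper and `π e ∈ S ↔ φ e`, because if `π x` is covered by finitely many `π y` then
`π x = ⨆ π (x ⊓ y)`, so the `X_π`-to-join property forces some `φ (x ⊓ y)`, hence some `φ y`.
The elements that lie in `S` or are disjoint from a member of `S` form a generalized Boolean
subalgebra containing `π(E)`, hence all of `B`; so `S` is an ultrafilter, and its indicator is
the required ultra character.
-/

section DecidedBy

variable {B : Type*} [GeneralizedBooleanAlgebra B] {S : Set B} {a b : B}

def decidedBy (S : Set B) : Set B := {b | b ∈ S ∨ ∃ c ∈ S, Disjoint c b}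

lemma bot_mem_decidedBy (hne : S.Nonempty) : ⊥ ∈ decidedBy S :=
  let ⟨c, hc⟩ := hne
  Or.inr ⟨c, hc, disjoint_bot_right⟩

lemma sup_mem_decidedBy (hup : IsUpperSet S) (hinf : InfClosed S)
    (ha : a ∈ decidedBy S) (hb : b ∈ decidedBy S) : a ⊔ b ∈ decidedBy S := by
  rcases ha with ha | ⟨c, hc, hca⟩
  · exact Or.inl (hup le_sup_left ha)
  rcases hb with hb | ⟨c', hc', hcb⟩
  · exact Or.inl (hup le_sup_right hb)
  exact Or.inr ⟨c ⊓ c', hinf hc hc', (hca.mono_left inf_le_left).sup_right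
    (hcb.mono_left inf_le_right)⟩

lemma inf_mem_decidedBy (hinf : InfClosed S)
    (ha : a ∈ decidedBy S) (hb : b ∈ decidedBy S) : a ⊓ b ∈ decidedBy S := by
  rcases ha with ha | ⟨c, hc, hca⟩
  · rcases hb with hb | ⟨c', hc', hcb⟩
    · exact Or.inl (hinf ha hb)
    · exact Or.inr ⟨c', hc', hcb.mono_right inf_le_right⟩
  · exact Or.inr ⟨c, hc, hca.mono_right inf_le_left⟩

lemma sdiff_mem_decidedBy (hup : IsUpperSet S) (hinf : InfClosed S)
    (ha : a ∈ decidedBy S) (hb : b ∈ decidedBy S) : a \ b ∈ decidedBy S := by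
  rcases ha with ha | ⟨c, hc, hca⟩
  · rcases hb with hb | ⟨c', hc', hcb⟩
    · exact Or.inr ⟨a ⊓ b, hinf ha hb, disjoint_sdiff_self_right.mono_left inf_le_right⟩
    · exact Or.inl (hup (le_sdiff.mpr ⟨inf_le_left, hcb.mono_left inf_le_right⟩)
        (hinf ha hc'))
  · exact Or.inr ⟨c, hc, hca.mono_right sdiff_le⟩

lemma mem_sup_iff_of_forall_mem_decidedBy (hup : IsUpperSet S) (hinf : InfClosed S)
    (hdec : ∀ b, b ∈ decidedBy S) : a ⊔ b ∈ S ↔ a ∈ S ∨ b ∈ S := by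
  refine ⟨fun hab => ?_, fun h => h.elim (hup le_sup_left) (hup le_sup_right)⟩
  rcases hdec a with ha | ⟨c, hc, hca⟩
  · exact Or.inl ha
  · have : c ⊓ (a ⊔ b) ≤ b := by rw [inf_sup_left, hca.eq_bot, bot_sup_eq]; exact inf_le_right
    exact Or.inr (hup this (hinf hc hab))

lemma mem_sdiff_iff_of_forall_mem_decidedBy (hup : IsUpperSet S) (hinf : InfClosed S)
    (hbot : ⊥ ∉ S) (hdec : ∀ b, b ∈ decidedBy S) : a \ b ∈ S ↔ a ∈ S ∧ b ∉ S := by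
  constructor
  · intro hab
    refine ⟨hup sdiff_le hab, fun hb => hbot ?_⟩
    simpa [disjoint_sdiff_self_left.eq_bot] using hinf hab hb
  · rintro ⟨ha, hb⟩
    rw [← sup_inf_sdiff a b, mem_sup_iff_of_forall_mem_decidedBy hup hinf hdec] at ha
    exact ha.resolve_left fun hab => hb (hup inf_le_right hab)

lemma mem_inf_iff_of_isUpperSet (hup : IsUpperSet S) (hinf : InfClosed S) :
    a ⊓ b ∈ S ↔ a ∈ S ∧ b ∈ S :=
  ⟨fun h => ⟨hup inf_le_left h, hup inf_le_right h⟩, fun h => hinf h.1 h.2⟩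

end DecidedBy

section CharFilter

variable {E B : Type*} [GeneralizedBooleanAlgebra B] {π : E → B} {φ : E → Bool}

variable (π φ) in
def charFilter : Set B :=
  {b | ∃ (x : E) (Y : Finset E), φ x = true ∧ (∀ y ∈ Y, φ y = false) ∧ π x \ Y.sup π ≤ b}

lemma isUpperSet_charFilter : IsUpperSet (charFilter π φ) :=
  fun _ _ hab ⟨x, Y, hx, hY, hle⟩ => ⟨x, Y, hx, hY, hle.trans hab⟩

lemma map_mem_charFilter {e : E} (he : φ e = true) : π e ∈ charFilter π φ :=
  ⟨e, ∅, he, by simp, by simp⟩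

lemma map_mem_decidedBy_charFilter {x₀ : E} (hx₀ : φ x₀ = true) (e : E) :
    π e ∈ decidedBy (charFilter π φ) := by
  cases he : φ e
  · exact Or.inr ⟨π x₀ \ π e, ⟨x₀, {e}, hx₀, by simpa using he, by simp⟩, disjoint_sdiff_self_left⟩
  · exact Or.inl (map_mem_charFilter he)

lemma infClosed_charFilter [SemilatticeInf E] (hinf : ∀ x y : E, π (x ⊓ y) = π x ⊓ π y)
    (hφinf : ∀ x y : E, φ (x ⊓ y) = (φ x && φ y)) : InfClosed (charFilter π φ) := by
  classical
  rintro a ⟨x, Y, hx, hY, hle⟩ b ⟨x', Y', hx', hY', hle'⟩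
  refine ⟨x ⊓ x', Y ∪ Y', by simp [hφinf, hx, hx'], ?_, ?_⟩
  · simpa only [Finset.mem_union, or_imp, forall_and] using ⟨hY, hY'⟩
  · rw [hinf, Finset.sup_union]
    exact le_inf ((sdiff_le_sdiff inf_le_left le_sup_left).trans hle)
      ((sdiff_le_sdiff inf_le_right le_sup_right).trans hle')

lemma exists_true_of_le_sup [SemilatticeInf E] (hinf : ∀ x y : E, π (x ⊓ y) = π x ⊓ π y)
    (hφinf : ∀ x y : E, φ (x ⊓ y) = (φ x && φ y))
    (hφX : ∀ (e : E) (F : Finset E), π e = F.sup π → (φ e = true ↔ ∃ f ∈ F, φ f = true))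
    {x : E} {Y : Finset E} (hx : φ x = true) (hle : π x ≤ Y.sup π) : ∃ y ∈ Y, φ y = true := by
  classical
  have hcover : π x = (Y.image (x ⊓ ·)).sup π := by
    rw [Finset.sup_image, ← inf_eq_left.mpr hle, Finset.sup_inf_distrib_left]
    exact Finset.sup_congr rfl fun y _ => (hinf x y).symm
  obtain ⟨_, hf, hφf⟩ := (hφX _ _ hcover).mp hx
  obtain ⟨y, hy, rfl⟩ := Finset.mem_image.mp hf
  rw [hφinf, Bool.and_eq_true] at hφf
  exact ⟨y, hy, hφf.2⟩

lemma bot_notMem_charFilter [SemilatticeInf E] (hinf : ∀ x y : E, π (x ⊓ y) = π x ⊓ π y)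
    (hφinf : ∀ x y : E, φ (x ⊓ y) = (φ x && φ y))
    (hφX : ∀ (e : E) (F : Finset E), π e = F.sup π → (φ e = true ↔ ∃ f ∈ F, φ f = true)) :
    ⊥ ∉ charFilter π φ := by
  rintro ⟨x, Y, hx, hY, hle⟩
  obtain ⟨y, hy, hφy⟩ :=
    exists_true_of_le_sup hinf hφinf hφX hx (sdiff_eq_bot_iff.mp (le_bot_iff.mp hle))
  simp [hY y hy] at hφy

lemma map_mem_charFilter_iff [SemilatticeInf E] (hinf : ∀ x y : E, π (x ⊓ y) = π x ⊓ π y)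
    (hφinf : ∀ x y : E, φ (x ⊓ y) = (φ x && φ y))
    (hφX : ∀ (e : E) (F : Finset E), π e = F.sup π → (φ e = true ↔ ∃ f ∈ F, φ f = true))
    (e : E) : π e ∈ charFilter π φ ↔ φ e = true := by
  classical
  refine ⟨fun ⟨x, Y, hx, hY, hle⟩ => ?_, map_mem_charFilter⟩
  have hle' : π x ≤ (insert e Y).sup π := by
    rw [Finset.sup_insert, sup_comm]
    exact sdiff_le_iff.mp hle
  obtain ⟨y, hy, hφy⟩ := exists_true_of_le_sup hinf hφinf hφX hx hle'
  rcases Finset.mem_insert.mp hy with rfl | hy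
  · exact hφy
  · simp [hY y hy] at hφy

end CharFilter

theorem statement1_general {E B : Type*} [SemilatticeInf E]
    [GeneralizedBooleanAlgebra B]
    (π : E → B)
    (hinf : ∀ x y : E, π (x ⊓ y) = π x ⊓ π y)
    (hgen : ∀ T : Set B, (∀ e : E, π e ∈ T) → ⊥ ∈ T →
      (∀ a ∈ T, ∀ b ∈ T, a ⊔ b ∈ T ∧ a ⊓ b ∈ T ∧ a \ b ∈ T) → T = Set.univ)
    (φ : E → Bool)
    (hφinf : ∀ x y : E, φ (x ⊓ y) = (φ x && φ y))
    (hφne : ∃ x : E, φ x = true)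
    (hφX : ∀ (e : E) (F : Finset E), π e = F.sup π →
      (φ e = true ↔ ∃ f ∈ F, φ f = true)) :
    ∃ ψ : B → Bool,
      (∃ b : B, ψ b = true) ∧
      ψ ⊥ = false ∧
      (∀ a b : B, ψ (a ⊓ b) = (ψ a && ψ b)) ∧
      (∀ a b : B, ψ (a ⊔ b) = (ψ a || ψ b)) ∧
      (∀ a b : B, ψ (a \ b) = (ψ a && !ψ b)) ∧
      ∀ e : E, φ e = ψ (π e) := by
  classical
  obtain ⟨x₀, hx₀⟩ := hφne
  set S := charFilter π φ
  have hup : IsUpperSet S := isUpperSet_charFilter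
  have hS : InfClosed S := infClosed_charFilter hinf hφinf
  have hbot : ⊥ ∉ S := bot_notMem_charFilter hinf hφinf hφX
  have hmem : ∀ e, π e ∈ S ↔ φ e = true := map_mem_charFilter_iff hinf hφinf hφX
  have hdec : ∀ b, b ∈ decidedBy S := Set.eq_univ_iff_forall.mp <|
    hgen _ (map_mem_decidedBy_charFilter hx₀) (bot_mem_decidedBy ⟨_, map_mem_charFilter hx₀⟩)
      fun a ha b hb => ⟨sup_mem_decidedBy hup hS ha hb, inf_mem_decidedBy hS ha hb,
        sdiff_mem_decidedBy hup hS ha hb⟩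
  refine ⟨fun b => decide (b ∈ S), ⟨π x₀, by simpa [hmem] using hx₀⟩, by simpa using hbot,
    fun a b => ?_, fun a b => ?_, fun a b => ?_, fun e => ?_⟩
  · simp [mem_inf_iff_of_isUpperSet hup hS]
  · simp [mem_sup_iff_of_forall_mem_decidedBy hup hS hdec]
  · simp [mem_sdiff_iff_of_forall_mem_decidedBy hup hS hbot hdec]
  · simp [hmem]

/-- Lemma 3.5.  If `π : E → B` is a representation of a meet-semilattice
with bottom in a generalized Boolean algebra whose image generates `B`, then every
`X_π`-to-join character of `E` factors through an ultra character of `B`. -/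
theorem statement1 {E B : Type*} [SemilatticeInf E] [OrderBot E]
    [GeneralizedBooleanAlgebra B]
    (π : E → B)
    (hbot : π ⊥ = ⊥)
    (hinf : ∀ x y : E, π (x ⊓ y) = π x ⊓ π y)
    (hgen : ∀ T : Set B, (∀ e : E, π e ∈ T) → ⊥ ∈ T →
      (∀ a ∈ T, ∀ b ∈ T, a ⊔ b ∈ T ∧ a ⊓ b ∈ T ∧ a \ b ∈ T) → T = Set.univ)
    (φ : E → Bool)
    (hφbot : φ ⊥ = false)
    (hφinf : ∀ x y : E, φ (x ⊓ y) = (φ x && φ y))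
    (hφne : ∃ x : E, φ x = true)
    (hφX : ∀ (e : E) (F : Finset E), π e = F.sup π →
      (φ e = true ↔ ∃ f ∈ F, φ f = true)) :
    ∃ ψ : B → Bool,
      (∃ b : B, ψ b = true) ∧
      ψ ⊥ = false ∧
      (∀ a b : B, ψ (a ⊓ b) = (ψ a && ψ b)) ∧
      (∀ a b : B, ψ (a ⊔ b) = (ψ a || ψ b)) ∧
      (∀ a b : B, ψ (a \ b) = (ψ a && !ψ b)) ∧
      ∀ e : E, φ e = ψ (π e) :=
  statement1_general π hinf hgen φ hφinf hφne hφX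
end

section
/- Let E be a meet-semilattice with bottom ⊥, X ⊆ E × Finset E, B a generalized Boolean algebra, and φ : E → B an X-to-join representation. Let KO denote the collection of compact open subsets of the space \hat{E}_X of X-to-join characters. Then there exists a unique function ψ : KO → B satisfying ψ(∅) = ⊥, ψ(U ∪ V) = ψ(U) ⊔ ψ(V), ψ(U ∩ V) = ψ(U) ⊓ ψ(V), ψ(U \ V) = ψ(U) \ ψ(V) for all U, V ∈ KO, and ψ(M_a) = φ(a) for all a ∈ E; moreover this ψ is proper, i.e. for every b ∈ B there exists U ∈ KO with b ≤ ψ(U). (Theorem 3.3: the universal property of the X-to-join Booleanization B_X(E).) -/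
/-- The set of `X`-to-join characters of a meet-semilattice `E` with bottom. -/
def XtoJoinChars {E : Type*} [SemilatticeInf E] [OrderBot E]
    (X : Set (E × Finset E)) : Set (E → Bool) :=
  {φ | φ ⊥ = false ∧ (∀ x y : E, φ (x ⊓ y) = (φ x && φ y)) ∧ (∃ x : E, φ x = true) ∧
    ∀ p ∈ X, (φ p.1 = true ↔ ∃ f ∈ p.2, φ f = true)}

/-- The basic set `M_a = {φ ∈ Ê_X : φ(a) = true}`. -/
def Mset {E : Type*} [SemilatticeInf E] [OrderBot E]
    (X : Set (E × Finset E)) (a : E) : Set (XtoJoinChars X) :=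
  {φ | (φ : E → Bool) a = true}

/-- The compact open subsets of the character space `Ê_X`. -/
def CompactOpens {E : Type*} [SemilatticeInf E] [OrderBot E]
    (X : Set (E × Finset E)) :=
  {U : Set (XtoJoinChars X) // IsCompact U ∧ IsOpen U}

/-- `ψ : KO(Ê_X) → B` sends `∅` to `⊥`, unions to joins, intersections to meets,
set differences to relative complements, and `M_a` to `φ a`. -/
def IsBooleanizationMap {E B : Type*} [SemilatticeInf E] [OrderBot E]
    [GeneralizedBooleanAlgebra B] (X : Set (E × Finset E)) (φ : E → B)
    (ψ : CompactOpens X → B) : Prop :=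
  (∀ W : CompactOpens X, W.1 = (∅ : Set (XtoJoinChars X)) → ψ W = ⊥) ∧
  (∀ U V W : CompactOpens X, W.1 = U.1 ∪ V.1 → ψ W = ψ U ⊔ ψ V) ∧
  (∀ U V W : CompactOpens X, W.1 = U.1 ∩ V.1 → ψ W = ψ U ⊓ ψ V) ∧
  (∀ U V W : CompactOpens X, W.1 = U.1 \ V.1 → ψ W = ψ U \ ψ V) ∧
  (∀ (a : E) (W : CompactOpens X), W.1 = Mset X a → ψ W = φ a)

/-!
A prime ideal `J` of `B` yields the `X`-to-join character `x ↦ [φ x ∉ J]`. A compact open set of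
characters is a finite union of basic sets `M_a \ (M_{b₁} ∪ ⋯ ∪ M_{bₙ})`, so the required
identities force the value of `ψ` on it. This value does not depend on how the set is written:
a nonzero element of `B` lies outside some prime ideal, and the corresponding character separates
any two candidate values.
-/

namespace Order.Ideal
variable {B : Type*} [GeneralizedBooleanAlgebra B] {J : Ideal B}

theorem IsPrime.inf_mem_iff (hJ : J.IsPrime) {x y : B} : x ⊓ y ∈ J ↔ x ∈ J ∨ y ∈ J :=
  ⟨hJ.mem_or_mem, fun h => h.elim (J.lower inf_le_left) (J.lower inf_le_right)⟩

theorem IsPrime.sdiff_mem_iff (hJ : J.IsPrime) {x y : B} : x \ y ∈ J ↔ x ∈ J ∨ y ∉ J := by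
  constructor
  · intro h
    by_contra! hxy
    exact hxy.1 (sup_inf_sdiff x y ▸ J.sup_mem (J.lower inf_le_right hxy.2) h)
  · rintro (hx | hy)
    · exact J.lower sdiff_le hx
    · have : x \ y ⊓ y ∈ J := by rw [inf_sdiff_self_left]; exact J.bot_mem
      exact (hJ.inf_mem_iff.mp this).resolve_right hy

theorem exists_isPrime_notMem {b : B} (hb : b ≠ ⊥) : ∃ J : Ideal B, J.IsPrime ∧ b ∉ J := by
  have hdisj : Disjoint (PFilter.principal b : Set B) (principal (⊥ : B) : Set B) :=
    Set.disjoint_left.mpr fun x hbx hx =>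
      hb (le_bot_iff.mp ((PFilter.mem_principal.mp hbx).trans (mem_principal.mp hx)))
  obtain ⟨J, hJ, -, hdisj⟩ := DistribLattice.prime_ideal_of_disjoint_filter_ideal hdisj
  exact ⟨J, hJ, Set.disjoint_left.mp hdisj (PFilter.mem_principal.mpr le_rfl)⟩

end Order.Ideal

structure IsXtoJoinRepresentation {E B : Type*} [SemilatticeInf E] [OrderBot E]
    [GeneralizedBooleanAlgebra B] (X : Set (E × Finset E)) (φ : E → B) : Prop where
  map_bot : φ ⊥ = ⊥
  map_inf : ∀ x y : E, φ (x ⊓ y) = φ x ⊓ φ y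
  exists_le_finsetSup : ∀ b : B, ∃ s : Finset E, b ≤ s.sup φ
  map_eq_finsetSup : ∀ p ∈ X, φ p.1 = p.2.sup φ

section Characters

open Classical in
noncomputable def idealCharacter {E B : Type*} [GeneralizedBooleanAlgebra B] (φ : E → B)
    (J : Order.Ideal B) : E → Bool :=
  fun x => decide (φ x ∉ J)

@[simp]
theorem idealCharacter_eq_true {E B : Type*} [GeneralizedBooleanAlgebra B] {φ : E → B}
    {J : Order.Ideal B} {x : E} : idealCharacter φ J x = true ↔ φ x ∉ J := by
  simp [idealCharacter]

variable {E : Type*} [SemilatticeInf E] [OrderBot E] {X : Set (E × Finset E)}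

namespace XtoJoinChars

theorem eq_true_of_le {χ : E → Bool} (hχ : χ ∈ XtoJoinChars X) {a b : E} (hab : a ≤ b)
    (ha : χ a = true) : χ b = true := by
  have := hχ.2.1 a b
  rw [inf_eq_left.mpr hab, ha, Bool.true_and] at this
  exact this.symm

theorem exists_le_of_forall_eq_true {χ : E → Bool} (hχ : χ ∈ XtoJoinChars X) (s : Finset E)
    (hs : ∀ i ∈ s, χ i = true) : ∃ a, χ a = true ∧ ∀ i ∈ s, a ≤ i := by
  classical
  induction s using Finset.induction_on with
  | empty => simpa using hχ.2.2.1
  | insert i s _ ih =>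
    obtain ⟨a, ha, has⟩ := ih fun j hj => hs j (Finset.mem_insert_of_mem hj)
    refine ⟨a ⊓ i, by rw [hχ.2.1, ha, hs i (Finset.mem_insert_self i s)]; rfl, ?_⟩
    rw [Finset.forall_mem_insert]
    exact ⟨inf_le_right, fun j hj => inf_le_of_left_le (has j hj)⟩

end XtoJoinChars

variable {B : Type*} [GeneralizedBooleanAlgebra B] {φ : E → B} {J : Order.Ideal B}

theorem IsXtoJoinRepresentation.idealCharacter_mem (hφ : IsXtoJoinRepresentation X φ)
    (hJ : J.IsPrime) : idealCharacter φ J ∈ XtoJoinChars X := by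
  refine ⟨?_, fun x y => ?_, ?_, fun p hp => ?_⟩
  · rw [← Bool.not_eq_true, idealCharacter_eq_true, hφ.map_bot, not_not]
    exact J.bot_mem
  · rw [Bool.eq_iff_iff]
    simp [hφ.map_inf, hJ.inf_mem_iff, not_or]
  · obtain ⟨b, hb⟩ := (Set.ne_univ_iff_exists_notMem _).mp hJ.ne_univ
    obtain ⟨s, hs⟩ := hφ.exists_le_finsetSup b
    have : s.sup φ ∉ J := fun h => hb (J.lower hs h)
    obtain ⟨x, -, hx⟩ : ∃ x ∈ s, φ x ∉ J := by simpa using this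
    exact ⟨x, idealCharacter_eq_true.mpr hx⟩
  · simp [hφ.map_eq_finsetSup p hp, Order.Ideal.finsetSup_mem_iff]

end Characters

theorem isClosed_setOf_eq_true_iff_exists {E : Type*} (a : E) (s : Finset E) :
    IsClosed {f : E → Bool | f a = true ↔ ∃ q ∈ s, f q = true} := by
  have := (isClosed_discrete {v : Bool × (s → Bool) | v.1 = true ↔ ∃ q, v.2 q = true}).preimage
    (f := fun f : E → Bool => (f a, fun q : s => f q)) (by fun_prop)
  simpa [Finset.exists_coe] using this

section Topology
variable {E : Type*} [SemilatticeInf E] [OrderBot E] {X : Set (E × Finset E)}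

theorem isClopen_Mset (a : E) : IsClopen (Mset X a) :=
  (isClopen_discrete {true}).preimage ((continuous_apply a).comp continuous_subtype_val)

theorem Mset_bot : Mset X (⊥ : E) = ∅ :=
  Set.eq_empty_of_forall_notMem fun χ hχ => Bool.false_ne_true (χ.2.1 ▸ hχ)

theorem isCompact_Mset (a : E) : IsCompact (Mset X a) := by
  rw [Topology.IsEmbedding.subtypeVal.isCompact_iff]
  have himg : Subtype.val '' Mset X a = {f : E → Bool | f ⊥ = false} ∩
      (⋂ x, ⋂ y, {f | f (x ⊓ y) = (f x && f y)}) ∩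
      (⋂ p ∈ X, {f | f p.1 = true ↔ ∃ q ∈ p.2, f q = true}) ∩ {f | f a = true} := by
    ext f
    simp only [Set.mem_image, Set.mem_inter_iff, Set.mem_iInter, Set.mem_ofPred_eq]
    constructor
    · rintro ⟨χ, hχa, rfl⟩
      exact ⟨⟨⟨χ.2.1, χ.2.2.1⟩, χ.2.2.2.2⟩, hχa⟩
    · rintro ⟨⟨⟨hbot, hinf⟩, hX⟩, ha⟩
      exact ⟨⟨f, hbot, hinf, ⟨a, ha⟩, hX⟩, ha, rfl⟩
  rw [himg]
  refine IsClosed.isCompact (IsClosed.inter (IsClosed.inter (IsClosed.inter ?_ ?_) ?_) ?_)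
  · exact isClosed_eq (continuous_apply _) continuous_const
  · exact isClosed_iInter fun x => isClosed_iInter fun y => isClosed_eq (by fun_prop) (by fun_prop)
  · exact isClosed_biInter fun p _ => isClosed_setOf_eq_true_iff_exists p.1 p.2
  · exact isClosed_eq (continuous_apply _) continuous_const

theorem exists_Mset_sdiff_subset {U : Set (XtoJoinChars X)} (hU : IsOpen U)
    {χ : XtoJoinChars X} (hχ : χ ∈ U) : ∃ (a : E) (t : Finset E),
      χ ∈ Mset X a \ ⋃ b ∈ t, Mset X b ∧ Mset X a \ ⋃ b ∈ t, Mset X b ⊆ U := by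
  classical
  obtain ⟨V, hV, rfl⟩ := isOpen_induced_iff.mp hU
  obtain ⟨I, u, hIu, hIV⟩ := isOpen_pi_iff.mp hV χ.1 hχ
  obtain ⟨a, ha, haI⟩ :=
    XtoJoinChars.exists_le_of_forall_eq_true χ.2 (I.filter (χ.1 · = true)) (by simp)
  refine ⟨a, I.filter (χ.1 · = false), ⟨ha, by simp [Mset]⟩, ?_⟩
  rintro ψ ⟨hψa, hψt⟩
  refine hIV fun i (hi : i ∈ I) => ?_
  have : ψ.1 i = χ.1 i := by
    cases hχi : χ.1 i
    · simp only [Set.mem_iUnion, not_exists] at hψt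
      simpa [Mset] using hψt i (by simp [hi, hχi])
    · exact XtoJoinChars.eq_true_of_le ψ.2 (haI i (by simp [hi, hχi])) hψa
  exact this ▸ (hIu i hi).2

end Topology

section BooleanCombinations
variable {E B : Type*} [SemilatticeInf E] [OrderBot E] [GeneralizedBooleanAlgebra B]
  {X : Set (E × Finset E)} {φ : E → B}

/-- The graph of the map `ψ` of the theorem. -/
inductive IsBoolCombination (X : Set (E × Finset E)) (φ : E → B) :
    Set (XtoJoinChars X) → B → Prop
  | basic (a : E) : IsBoolCombination X φ (Mset X a) (φ a)
  | union {S T b c} : IsBoolCombination X φ S b → IsBoolCombination X φ T c →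
      IsBoolCombination X φ (S ∪ T) (b ⊔ c)
  | inter {S T b c} : IsBoolCombination X φ S b → IsBoolCombination X φ T c →
      IsBoolCombination X φ (S ∩ T) (b ⊓ c)
  | sdiff {S T b c} : IsBoolCombination X φ S b → IsBoolCombination X φ T c →
      IsBoolCombination X φ (S \ T) (b \ c)

namespace IsBoolCombination

theorem empty (hbot : φ ⊥ = ⊥) : IsBoolCombination X φ ∅ ⊥ :=
  Mset_bot (X := X) ▸ hbot ▸ basic ⊥

theorem finsetSup {ι : Type*} (hbot : φ ⊥ = ⊥) (s : Finset ι) {S : ι → Set (XtoJoinChars X)}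
    {b : ι → B} (h : ∀ i ∈ s, IsBoolCombination X φ (S i) (b i)) :
    IsBoolCombination X φ (⋃ i ∈ s, S i) (s.sup b) := by
  classical
  induction s using Finset.induction_on with
  | empty => simpa using empty hbot
  | insert i s _ ih =>
    rw [Finset.set_biUnion_insert, Finset.sup_insert]
    exact union (h i (Finset.mem_insert_self i s))
      (ih fun j hj => h j (Finset.mem_insert_of_mem hj))

theorem isCompact_isOpen {S : Set (XtoJoinChars X)} {b : B} (h : IsBoolCombination X φ S b) :
    IsCompact S ∧ IsOpen S := by
  induction h with
  | basic a => exact ⟨isCompact_Mset a, (isClopen_Mset a).isOpen⟩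
  | union _ _ hS hT => exact ⟨hS.1.union hT.1, hS.2.union hT.2⟩
  | inter _ _ hS hT => exact ⟨hS.1.inter hT.1, hS.2.inter hT.2⟩
  | sdiff _ _ hS hT => exact ⟨hS.1.diff hT.2, hS.2.sdiff hT.1.isClosed⟩

def toCompactOpens {S : Set (XtoJoinChars X)} {b : B} (h : IsBoolCombination X φ S b) :
    CompactOpens X :=
  ⟨S, h.isCompact_isOpen⟩

theorem mem_iff (hφ : IsXtoJoinRepresentation X φ) {J : Order.Ideal B} (hJ : J.IsPrime)
    {S : Set (XtoJoinChars X)} {b : B} (h : IsBoolCombination X φ S b) :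
    ⟨idealCharacter φ J, hφ.idealCharacter_mem hJ⟩ ∈ S ↔ b ∉ J := by
  induction h with
  | basic a => exact idealCharacter_eq_true
  | union _ _ hS hT => rw [Set.mem_union, hS, hT, Order.Ideal.sup_mem_iff, not_and_or]
  | inter _ _ hS hT => rw [Set.mem_inter_iff, hS, hT, hJ.inf_mem_iff, not_or]
  | sdiff _ _ hS hT => rw [Set.mem_sdiff, hS, hT, hJ.sdiff_mem_iff, not_or, not_not]

theorem le (hφ : IsXtoJoinRepresentation X φ) {S : Set (XtoJoinChars X)} {b c : B}
    (hb : IsBoolCombination X φ S b) (hc : IsBoolCombination X φ S c) : b ≤ c := by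
  rw [← sdiff_eq_bot_iff]
  by_contra hbc
  obtain ⟨J, hJ, hbcJ⟩ := Order.Ideal.exists_isPrime_notMem hbc
  rw [hJ.sdiff_mem_iff, not_or, not_not, ← hb.mem_iff hφ hJ, hc.mem_iff hφ hJ] at hbcJ
  exact hbcJ.1 hbcJ.2

theorem unique (hφ : IsXtoJoinRepresentation X φ) {S : Set (XtoJoinChars X)} {b c : B}
    (hb : IsBoolCombination X φ S b) (hc : IsBoolCombination X φ S c) : b = c :=
  (hb.le hφ hc).antisymm (hc.le hφ hb)

end IsBoolCombination

theorem exists_isBoolCombination (hbot : φ ⊥ = ⊥) {U : Set (XtoJoinChars X)}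
    (hUc : IsCompact U) (hUo : IsOpen U) : ∃ b, IsBoolCombination X φ U b := by
  choose! a t hmem hsub using fun χ (hχ : χ ∈ U) => exists_Mset_sdiff_subset hUo hχ
  obtain ⟨s, hsU, hUs⟩ := hUc.elim_nhds_subcover (fun χ => Mset X (a χ) \ ⋃ b ∈ t χ, Mset X b)
    fun χ hχ => ((isClopen_Mset _).isOpen.sdiff (isClosed_biUnion_finset fun b _ =>
      (isClopen_Mset b).isClosed)).mem_nhds (hmem χ hχ)
  have hU : U = ⋃ χ ∈ s, (Mset X (a χ) \ ⋃ b ∈ t χ, Mset X b) :=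
    hUs.antisymm (Set.iUnion₂_subset fun χ hχ => hsub χ (hsU χ hχ))
  exact ⟨_, hU ▸ IsBoolCombination.finsetSup hbot s fun χ _ =>
    .sdiff (.basic _) (IsBoolCombination.finsetSup hbot _ fun b _ => .basic b)⟩

end BooleanCombinations

section Booleanization
variable {E B : Type*} [SemilatticeInf E] [OrderBot E] [GeneralizedBooleanAlgebra B]
  {X : Set (E × Finset E)} {φ : E → B}

theorem IsBooleanizationMap.eq_of_isBoolCombination {ψ : CompactOpens X → B}
    (hψ : IsBooleanizationMap X φ ψ) {S : Set (XtoJoinChars X)} {b : B}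
    (h : IsBoolCombination X φ S b) (W : CompactOpens X) (hW : W.1 = S) : ψ W = b := by
  obtain ⟨-, hunion, hinter, hsdiff, hbasic⟩ := hψ
  induction h generalizing W with
  | basic a => exact hbasic a W hW
  | union hS hT ihS ihT =>
    rw [hunion hS.toCompactOpens hT.toCompactOpens W hW, ihS _ rfl, ihT _ rfl]
  | inter hS hT ihS ihT =>
    rw [hinter hS.toCompactOpens hT.toCompactOpens W hW, ihS _ rfl, ihT _ rfl]
  | sdiff hS hT ihS ihT =>
    rw [hsdiff hS.toCompactOpens hT.toCompactOpens W hW, ihS _ rfl, ihT _ rfl]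

theorem isBooleanizationMap_of_isBoolCombination (hφ : IsXtoJoinRepresentation X φ)
    {ψ : CompactOpens X → B} (hψ : ∀ U, IsBoolCombination X φ U.1 (ψ U)) :
    IsBooleanizationMap X φ ψ := by
  refine ⟨fun W hW => ?_, fun U V W hW => ?_, fun U V W hW => ?_, fun U V W hW => ?_,
    fun a W hW => ?_⟩ <;> refine (hψ W).unique hφ (hW ▸ ?_)
  · exact .empty hφ.map_bot
  · exact .union (hψ U) (hψ V)
  · exact .inter (hψ U) (hψ V)
  · exact .sdiff (hψ U) (hψ V)
  · exact .basic a

end Booleanization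

/-- Theorem 3.3.  For every `X`-to-join representation `φ : E → B` there is
a unique map `ψ` from the compact opens of `Ê_X` to `B` preserving `∅`, unions,
intersections and differences and sending `M_a` to `φ a`; moreover this `ψ` is proper. -/
theorem statement2 {E B : Type*} [SemilatticeInf E] [OrderBot E]
    [GeneralizedBooleanAlgebra B]
    (X : Set (E × Finset E)) (φ : E → B)
    (hbot : φ ⊥ = ⊥)
    (hinf : ∀ x y : E, φ (x ⊓ y) = φ x ⊓ φ y)
    (hproper : ∀ b : B, ∃ s : Finset E, b ≤ s.sup φ)
    (hX : ∀ p ∈ X, φ p.1 = p.2.sup φ) :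
    ∃ ψ : CompactOpens X → B,
      IsBooleanizationMap X φ ψ ∧
      (∀ b : B, ∃ U : CompactOpens X, b ≤ ψ U) ∧
      ∀ ψ' : CompactOpens X → B, IsBooleanizationMap X φ ψ' → ψ' = ψ := by
  have hφ : IsXtoJoinRepresentation X φ := ⟨hbot, hinf, hproper, hX⟩
  choose ψ hψ using fun U : CompactOpens X => exists_isBoolCombination hbot U.2.1 U.2.2
  have hψmap := isBooleanizationMap_of_isBoolCombination hφ hψ
  refine ⟨ψ, hψmap, fun b => ?_,
    fun ψ' hψ' => funext fun U => hψ'.eq_of_isBoolCombination (hψ U) U rfl⟩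
  obtain ⟨s, hs⟩ := hproper b
  have hs' := IsBoolCombination.finsetSup hbot s fun a _ => .basic (X := X) (φ := φ) a
  exact ⟨hs'.toCompactOpens, hs.trans (hψmap.eq_of_isBoolCombination hs' _ rfl).ge⟩
end

section
/- Let E be a meet-semilattice with bottom ⊥ and X ⊆ E × Finset E. For every a ∈ E, the set M_a = {φ ∈ \hat{E}_X : φ(a) = true} is a compact open subset of \hat{E}_X. -/
/-!
In `E → Bool` every condition on finitely many coordinates cuts out a clopen set. The defining
conditions of a character are of this kind, except for `φ ≠ 0`, which is implied by `φ a = true`.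
So the image of `M_a` in `E → Bool` is closed, hence compact since `E → Bool` is.
-/

theorem DependsOn.isClopen_setOf {ι : Type*} {α : ι → Type*} [∀ i, TopologicalSpace (α i)]
    [∀ i, DiscreteTopology (α i)] {P : (Π i, α i) → Prop} {s : Set ι} (hs : s.Finite)
    (hP : DependsOn P s) : IsClopen {x | P x} := by
  obtain ⟨g, rfl⟩ := dependsOn_iff_exists_comp.mp hP
  have : Finite s := hs
  exact (isClopen_discrete {y | g y}).preimage (Pi.continuous_domRestrict s)

theorem isClopen_setOf_apply_eq {ι : Type*} (i : ι) (b : Bool) :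
    IsClopen {φ : ι → Bool | φ i = b} :=
  DependsOn.isClopen_setOf (s := {i}) (Set.finite_singleton i) fun φ ψ h => by
    rw [h i rfl]

theorem isClosed_setOf_toJoin {E : Type*} (X : Set (E × Finset E)) :
    IsClosed {φ : E → Bool | ∀ p ∈ X, (φ p.1 = true ↔ ∃ f ∈ p.2, φ f = true)} := by
  simp only [Set.ofPred_forall]
  refine isClosed_biInter fun p _ => ?_
  refine (DependsOn.isClopen_setOf (s := insert p.1 p.2) (Set.toFinite _)
    fun φ ψ h => ?_).isClosed
  have hf : ∀ f ∈ p.2, φ f = ψ f := fun f hf => h f (Set.mem_insert_of_mem _ hf)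
  rw [h p.1 (Set.mem_insert _ _)]
  congr 1
  exact propext (exists_congr fun f => and_congr_right fun hfp => by rw [hf f hfp])

section Characters

variable {E : Type*} [SemilatticeInf E]

theorem isClosed_setOf_map_inf :
    IsClosed {φ : E → Bool | ∀ x y : E, φ (x ⊓ y) = (φ x && φ y)} := by
  simp only [Set.ofPred_forall]
  refine isClosed_iInter fun x => isClosed_iInter fun y => ?_
  refine (DependsOn.isClopen_setOf (s := {x ⊓ y, x, y}) (Set.toFinite _) fun φ ψ h => ?_).isClosed
  simp only [Set.mem_insert_iff, Set.mem_singleton_iff, forall_eq_or_imp, forall_eq] at h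
  rw [h.1, h.2.1, h.2.2]

variable [OrderBot E]

theorem xtoJoinChars_inter_setOf_apply_eq_true (X : Set (E × Finset E)) (a : E) :
    XtoJoinChars X ∩ {φ | φ a = true} =
      {φ : E → Bool | φ ⊥ = false} ∩ {φ | ∀ x y : E, φ (x ⊓ y) = (φ x && φ y)} ∩
        {φ | ∀ p ∈ X, (φ p.1 = true ↔ ∃ f ∈ p.2, φ f = true)} ∩ {φ | φ a = true} := by
  ext φ
  simp only [XtoJoinChars, Set.mem_inter_iff, Set.mem_ofPred_eq]
  exact ⟨fun ⟨⟨hbot, hinf, _, hX⟩, ha⟩ => ⟨⟨⟨hbot, hinf⟩, hX⟩, ha⟩,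
    fun ⟨⟨⟨hbot, hinf⟩, hX⟩, ha⟩ => ⟨⟨hbot, hinf, ⟨a, ha⟩, hX⟩, ha⟩⟩

theorem isClosed_xtoJoinChars_inter_setOf_apply_eq_true (X : Set (E × Finset E)) (a : E) :
    IsClosed (XtoJoinChars X ∩ {φ | φ a = true}) := by
  rw [xtoJoinChars_inter_setOf_apply_eq_true]
  exact (((isClopen_setOf_apply_eq ⊥ false).isClosed.inter isClosed_setOf_map_inf).inter
    (isClosed_setOf_toJoin X)).inter (isClopen_setOf_apply_eq a true).isClosed

end Characters

/-- For every `a ∈ E`, the set `M_a` is a compact open subset of the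
space `Ê_X` of `X`-to-join characters (with the subspace topology from the product
topology on `E → Bool`, `Bool` discrete). -/
theorem statement5 {E : Type*} [SemilatticeInf E] [OrderBot E]
    (X : Set (E × Finset E)) (a : E) :
    IsCompact (Mset X a) ∧ IsOpen (Mset X a) := by
  have hM : Mset X a = Subtype.val ⁻¹' {φ : E → Bool | φ a = true} := rfl
  refine ⟨?_, hM ▸ ((isClopen_setOf_apply_eq a true).preimage continuous_subtype_val).isOpen⟩
  rw [Topology.IsEmbedding.subtypeVal.isCompact_iff, hM, Subtype.image_preimage_coe]
  exact (isClosed_xtoJoinChars_inter_setOf_apply_eq_true X a).isCompact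
end

section
/- Let E be a meet-semilattice with bottom ⊥ and X ⊆ E × Finset E. A subset U of \hat{E}_X is compact and open (in the subspace topology from E → Bool) if and only if U is a finite union of sets of the form M_a \ (M_{b₁} ∪ … ∪ M_{bₖ}) with k ≥ 0, a, b₁, …, bₖ ∈ E and b₁, …, bₖ ≤ a. In particular, the sets M_a (a ∈ E) generate the generalized Boolean algebra of compact open subsets of \hat{E}_X. -/
theorem isClopen_of_forall_eqOn_finset {ι α : Type*} [TopologicalSpace α] [DiscreteTopology α]
    (S : Finset ι) {P : Set (ι → α)}
    (hP : ∀ f g : ι → α, (∀ i ∈ S, f i = g i) → f ∈ P → g ∈ P) : IsClopen P := by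
  have hP : P = S.restrict ⁻¹' (S.restrict '' P) := by
    refine (Set.subset_preimage_image _ _).antisymm ?_
    rintro g ⟨f, hf, hfg⟩
    exact hP f g (fun i hi => congr_fun hfg ⟨i, hi⟩) hf
  rw [hP]
  exact (isClopen_discrete _).preimage (Finset.continuous_restrict S)

theorem exists_finset_forall_eqOn_mem_of_isOpen {ι α : Type*} [TopologicalSpace α]
    {V : Set (ι → α)} (hV : IsOpen V) {f : ι → α} (hf : f ∈ V) :
    ∃ S : Finset ι, ∀ g : ι → α, (∀ i ∈ S, g i = f i) → g ∈ V := by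
  obtain ⟨S, u, hu, hSu⟩ := isOpen_pi_iff.mp hV f hf
  exact ⟨S, fun g hg => hSu fun i hi => (hg i hi).symm ▸ (hu i hi).2⟩

section Characters

variable {E : Type*} [SemilatticeInf E] [OrderBot E] {X : Set (E × Finset E)}

namespace XtoJoinChars

variable (φ : XtoJoinChars X)

theorem apply_inf (x y : E) : φ.1 (x ⊓ y) = (φ.1 x && φ.1 y) :=
  φ.2.2.1 x y

theorem apply_eq_true_of_le {x y : E} (hxy : x ≤ y) (hx : φ.1 x = true) : φ.1 y = true := by
  have h := apply_inf φ x y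
  rw [inf_eq_left.mpr hxy, hx] at h
  simpa using h.symm

theorem apply_inf'_eq_true {ι : Type*} {s : Finset ι} (hs : s.Nonempty) (f : ι → E)
    (h : ∀ i ∈ s, φ.1 (f i) = true) : φ.1 (s.inf' hs f) = true :=
  s.inf'_induction hs f (p := fun x => φ.1 x = true)
    (fun x hx y hy => by simp [apply_inf φ, hx, hy]) h

end XtoJoinChars

def MsetDiff (X : Set (E × Finset E)) (a : E) (b : Finset E) : Set (XtoJoinChars X) :=
  Mset X a \ ⋃ x ∈ b, Mset X x

theorem image_val_Mset (a : E) : Subtype.val '' Mset X a =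
    {φ : E → Bool | φ ⊥ = false} ∩ (⋂ x, ⋂ y, {φ | φ (x ⊓ y) = (φ x && φ y)}) ∩
      (⋂ p ∈ X, {φ | φ p.1 = true ↔ ∃ f ∈ p.2, φ f = true}) ∩ {φ | φ a = true} := by
  change Subtype.val '' (Subtype.val ⁻¹' {φ : E → Bool | φ a = true}) = _
  rw [Subtype.image_preimage_coe]
  ext φ
  simp only [XtoJoinChars, Set.mem_inter_iff, Set.mem_ofPred_eq, Set.mem_iInter]
  exact ⟨fun ⟨⟨h₁, h₂, _, h₃⟩, ha⟩ => ⟨⟨⟨h₁, h₂⟩, h₃⟩, ha⟩,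
    fun ⟨⟨⟨h₁, h₂⟩, h₃⟩, ha⟩ => ⟨⟨h₁, h₂, ⟨a, ha⟩, h₃⟩, ha⟩⟩

theorem isOpen_MsetDiff (a : E) (b : Finset E) : IsOpen (MsetDiff X a b) :=
  (isClopen_Mset a).isOpen.sdiff
    (b.finite_toSet.isClosed_biUnion fun x _ => (isClopen_Mset x).isClosed)

theorem isCompact_MsetDiff (a : E) (b : Finset E) : IsCompact (MsetDiff X a b) :=
  (isCompact_Mset a).diff (isOpen_biUnion fun x _ => (isClopen_Mset x).isOpen)

theorem exists_MsetDiff_forall_eqOn (φ : XtoJoinChars X) (S : Finset E) :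
    ∃ (a : E) (b : Finset E), (∀ x ∈ b, x ≤ a) ∧ φ ∈ MsetDiff X a b ∧
      ∀ ψ ∈ MsetDiff X a b, ∀ s ∈ S, ψ.1 s = φ.1 s := by
  classical
  -- The extra point `x₀` with `φ x₀ = true` only serves to make the meet `a` nonempty.
  obtain ⟨x₀, hx₀⟩ := φ.2.2.2.1
  set T := insert x₀ (S.filter (φ.1 · = true))
  set a := T.inf' (Finset.insert_nonempty _ _) id
  have hφa : φ.1 a = true := XtoJoinChars.apply_inf'_eq_true φ _ _ (by simp_all [T])
  set b := (S.filter (φ.1 · = false)).image (a ⊓ ·)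
  refine ⟨a, b, ?_, ⟨hφa, ?_⟩, ?_⟩
  · simp only [b, Finset.mem_image]
    rintro _ ⟨s, -, rfl⟩
    exact inf_le_left
  · simp [Mset, b, XtoJoinChars.apply_inf, hφa]
  rintro ψ ⟨hψa : ψ.1 a = true, hψb⟩ s hs
  cases hφs : φ.1 s
  · have hb : a ⊓ s ∈ b := Finset.mem_image_of_mem _ (Finset.mem_filter.2 ⟨hs, hφs⟩)
    have : ψ.1 (a ⊓ s) = false := by simpa [Mset] using fun h => hψb (Set.mem_biUnion hb h)
    simpa [XtoJoinChars.apply_inf, hψa] using this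
  · exact XtoJoinChars.apply_eq_true_of_le ψ (Finset.inf'_le id (by simp [T, hs, hφs])) hψa

theorem isTopologicalBasis_MsetDiff :
    TopologicalSpace.IsTopologicalBasis
      (Set.range fun p : {p : E × Finset E // ∀ x ∈ p.2, x ≤ p.1} => MsetDiff X p.1.1 p.1.2) := by
  refine TopologicalSpace.isTopologicalBasis_of_isOpen_of_nhds
    (by rintro _ ⟨p, rfl⟩; exact isOpen_MsetDiff _ _) fun φ U hφ hU => ?_
  obtain ⟨V, hV, rfl⟩ := isOpen_induced_iff.mp hU
  obtain ⟨S, hS⟩ := exists_finset_forall_eqOn_mem_of_isOpen hV hφ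
  obtain ⟨a, b, hab, hφab, hagree⟩ := exists_MsetDiff_forall_eqOn φ S
  exact ⟨_, ⟨⟨(a, b), hab⟩, rfl⟩, hφab, fun ψ hψ => hS ψ.1 (hagree ψ hψ)⟩

end Characters

/-- A subset of `Ê_X` is compact open iff it is a finite union of sets of
the form `M_a \ (M_{b₁} ∪ ⋯ ∪ M_{bₖ})` with `b₁, …, bₖ ≤ a`.  In particular the sets `M_a`
generate the generalized Boolean algebra of compact open subsets of `Ê_X`. -/
theorem statement6 {E : Type*} [SemilatticeInf E] [OrderBot E]
    (X : Set (E × Finset E)) (U : Set (XtoJoinChars X)) :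
    (IsCompact U ∧ IsOpen U) ↔
      ∃ (n : ℕ) (a : Fin n → E) (b : Fin n → Finset E),
        (∀ i, ∀ x ∈ b i, x ≤ a i) ∧
        U = ⋃ i, (Mset X (a i) \ ⋃ x ∈ b i, Mset X x) := by
  rw [isCompact_open_iff_eq_finite_iUnion_of_isTopologicalBasis _ isTopologicalBasis_MsetDiff
    fun p => isCompact_MsetDiff _ _]
  constructor
  · rintro ⟨s, hs, rfl⟩
    obtain ⟨n, f, rfl⟩ := hs.fin_embedding
    exact ⟨n, fun i => (f i).1.1, fun i => (f i).1.2, fun i => (f i).2, by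
      rw [Set.biUnion_range]; rfl⟩
  · rintro ⟨n, a, b, hab, rfl⟩
    exact ⟨Set.range fun i => ⟨(a i, b i), hab i⟩, Set.finite_range _, by
      rw [Set.biUnion_range]; rfl⟩
end

section
/- Let E be a meet-semilattice with bottom ⊥, X ⊆ E × Finset E, B a generalized Boolean algebra, and φ : E → B an X-to-join representation. For every map α : B → Bool that is not identically false and preserves ⊥, binary meets and binary joins, the composite α ∘ φ is an X-to-join character of E (in particular it is not identically false). Moreover, the map Γ sending α to α ∘ φ is continuous from the set of such maps α (as a subspace of B → Bool with the product topology) to \hat{E}_X. (This is the key step in the proof of Theorem 3.3.) -/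
/-- The maps `α : B → Bool` that are not identically false and preserve `⊥`, binary meets
and binary joins. -/
def GoodChars (B : Type*) [GeneralizedBooleanAlgebra B] : Set (B → Bool) :=
  {α | (∃ b : B, α b = true) ∧ α ⊥ = false ∧
    (∀ a b : B, α (a ⊓ b) = (α a && α b)) ∧ (∀ a b : B, α (a ⊔ b) = (α a || α b))}

namespace GoodChars

variable {B : Type*} [GeneralizedBooleanAlgebra B] {α : B → Bool}

theorem monotone (hα : α ∈ GoodChars B) : Monotone α := fun a b hab => by
  have hsup := hα.2.2.2 a b
  rw [sup_eq_right.2 hab] at hsup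
  rw [hsup]
  exact le_sup_left

theorem apply_finsetSup_eq_true_iff (hα : α ∈ GoodChars B) {E : Type*} (φ : E → B)
    (s : Finset E) : α (s.sup φ) = true ↔ ∃ e ∈ s, α (φ e) = true := by
  rw [Finset.apply_sup_eq_sup_comp α hα.2.2.2 hα.2.1]
  exact Finset.sup_eq_top_iff

theorem comp_mem_XtoJoinChars {E : Type*} [SemilatticeInf E] [OrderBot E]
    {X : Set (E × Finset E)} {φ : E → B} (hbot : φ ⊥ = ⊥)
    (hinf : ∀ x y : E, φ (x ⊓ y) = φ x ⊓ φ y) (hproper : ∀ b : B, ∃ s : Finset E, b ≤ s.sup φ)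
    (hX : ∀ p ∈ X, φ p.1 = p.2.sup φ) (hα : α ∈ GoodChars B) : α ∘ φ ∈ XtoJoinChars X := by
  refine ⟨by simp [hbot, hα.2.1], fun x y => by simp [hinf, hα.2.2.1], ?_, fun p hp => ?_⟩
  · obtain ⟨b, hb⟩ := hα.1
    obtain ⟨s, hbs⟩ := hproper b
    have hsup : α (s.sup φ) = true := Bool.le_iff_imp.1 (monotone hα hbs) hb
    obtain ⟨e, -, he⟩ := (apply_finsetSup_eq_true_iff hα φ s).1 hsup
    exact ⟨e, he⟩
  · simpa only [Function.comp_apply, hX p hp] using apply_finsetSup_eq_true_iff hα φ p.2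

end GoodChars

/-- key step of Theorem 3.3.  If `φ : E → B` is an `X`-to-join
representation, then for every `α ∈ GoodChars B` the composite `α ∘ φ` is an `X`-to-join
character of `E`, and the induced map `α ↦ α ∘ φ` is continuous. -/
theorem statement7 {E B : Type*} [SemilatticeInf E] [OrderBot E]
    [GeneralizedBooleanAlgebra B]
    (X : Set (E × Finset E)) (φ : E → B)
    (hbot : φ ⊥ = ⊥)
    (hinf : ∀ x y : E, φ (x ⊓ y) = φ x ⊓ φ y)
    (hproper : ∀ b : B, ∃ s : Finset E, b ≤ s.sup φ)
    (hX : ∀ p ∈ X, φ p.1 = p.2.sup φ) :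
    ∃ h : ∀ α : GoodChars B, (fun e : E => (α : B → Bool) (φ e)) ∈ XtoJoinChars X,
      Continuous fun α : GoodChars B =>
        (⟨fun e : E => (α : B → Bool) (φ e), h α⟩ : XtoJoinChars X) := by
  refine ⟨fun α => GoodChars.comp_mem_XtoJoinChars hbot hinf hproper hX α.2, ?_⟩
  have hcomp : Continuous fun α : GoodChars B => fun e : E => (α : B → Bool) (φ e) :=
    continuous_pi fun e => (continuous_apply (φ e)).comp continuous_subtype_val
  exact hcomp.subtype_mk _
end

section
/- Let S be an inverse semigroup with zero, s ∈ S, e an idempotent of S, and Z a finite set of idempotents of S. If Z is a cover of e in E(S), then {s⁻¹·z·s : z ∈ Z} is a cover of s⁻¹·e·s in E(S). (Example 3.10: the family of covers is S-invariant.) -/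
/-!
Given a nonzero idempotent `f ≤ s⁻¹ e s`, push it forward to `g = s f s⁻¹`. Since `f ≤ s⁻¹ s`,
`g` is a nonzero idempotent below `e` with `s⁻¹ g s = f`, so the cover `Z` supplies `z` with
`g z ≠ 0`; and `g z = s (f (s⁻¹ z s)) s⁻¹`, hence `f (s⁻¹ z s) ≠ 0`.
-/

/-- An inverse semigroup with zero: a semigroup with an absorbing element `0` and an
inverse operation satisfying `s * s⁻¹ * s = s` and `s⁻¹ * s * s⁻¹ = s⁻¹`, in which any two
idempotents commute. -/
class InverseSemigroupWithZero (S : Type*) extends Semigroup S, Zero S, Inv S where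
  zero_mul : ∀ s : S, 0 * s = 0
  mul_zero : ∀ s : S, s * 0 = 0
  mul_inv_mul : ∀ s : S, s * s⁻¹ * s = s
  inv_mul_inv : ∀ s : S, s⁻¹ * s * s⁻¹ = s⁻¹
  idem_comm : ∀ e f : S, e * e = e → f * f = f → e * f = f * e

namespace InverseSemigroupWithZero

variable {S : Type*} [InverseSemigroupWithZero S]

theorem isIdempotentElem_inv_mul_self (s : S) : IsIdempotentElem (s⁻¹ * s) := by
  rw [IsIdempotentElem, ← mul_assoc, inv_mul_inv]

theorem isIdempotentElem_mul_inv_self (s : S) : IsIdempotentElem (s * s⁻¹) := by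
  rw [IsIdempotentElem, ← mul_assoc, mul_inv_mul]

theorem inv_mul_mul_mul_inv {z : S} (hz : IsIdempotentElem z) (s : S) :
    s⁻¹ * z * s * s⁻¹ = s⁻¹ * z :=
  calc s⁻¹ * z * s * s⁻¹ = s⁻¹ * (z * (s * s⁻¹)) := by simp only [mul_assoc]
    _ = s⁻¹ * (s * s⁻¹ * z) := by rw [idem_comm _ _ hz (isIdempotentElem_mul_inv_self s)]
    _ = s⁻¹ * z := by rw [← mul_assoc, ← mul_assoc, inv_mul_inv]

theorem mul_inv_mul_self_of_eq_mul_conj {f : S} (x s : S) (hf : f = f * (s⁻¹ * x * s)) :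
    f * (s⁻¹ * s) = f := by
  nth_rewrite 1 [hf]
  calc f * (s⁻¹ * x * s) * (s⁻¹ * s) = f * (s⁻¹ * x * (s * s⁻¹ * s)) := by
        simp only [mul_assoc]
    _ = f := by rw [mul_inv_mul, ← hf]

theorem isIdempotentElem_conj {f : S} (hf : IsIdempotentElem f) (s : S) :
    IsIdempotentElem (s * f * s⁻¹) :=
  calc s * f * s⁻¹ * (s * f * s⁻¹) = s * (f * (s⁻¹ * s)) * f * s⁻¹ := by simp only [mul_assoc]
    _ = s * (s⁻¹ * s * f) * f * s⁻¹ := by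
        rw [idem_comm _ _ hf (isIdempotentElem_inv_mul_self s)]
    _ = s * s⁻¹ * s * (f * f) * s⁻¹ := by simp only [mul_assoc]
    _ = s * f * s⁻¹ := by rw [mul_inv_mul, hf.eq]

theorem inv_conj_conj {f s : S} (hf : IsIdempotentElem f) (hfs : f * (s⁻¹ * s) = f) :
    s⁻¹ * (s * f * s⁻¹) * s = f :=
  calc s⁻¹ * (s * f * s⁻¹) * s = s⁻¹ * s * (f * (s⁻¹ * s)) := by simp only [mul_assoc]
    _ = f := by rw [hfs, ← idem_comm _ _ hf (isIdempotentElem_inv_mul_self s), hfs]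

theorem conj_eq_conj_mul_of_eq_mul_conj {e f s : S} (he : IsIdempotentElem e)
    (hf : f = f * (s⁻¹ * e * s)) : s * f * s⁻¹ = s * f * s⁻¹ * e := by
  calc s * f * s⁻¹ = s * f * (s⁻¹ * e * s * s⁻¹) := by
        nth_rewrite 1 [hf]; simp only [mul_assoc]
    _ = s * f * s⁻¹ * e := by rw [inv_mul_mul_mul_inv he, mul_assoc (s * f)]

theorem conj_mul_eq_conj_mul_conj {z : S} (hz : IsIdempotentElem z) (s f : S) :
    s * f * s⁻¹ * z = s * (f * (s⁻¹ * z * s)) * s⁻¹ :=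
  calc s * f * s⁻¹ * z = s * f * (s⁻¹ * z) := mul_assoc _ _ _
    _ = s * f * (s⁻¹ * z * s * s⁻¹) := by rw [inv_mul_mul_mul_inv hz]
    _ = s * (f * (s⁻¹ * z * s)) * s⁻¹ := by simp only [mul_assoc]

end InverseSemigroupWithZero

open InverseSemigroupWithZero in
/-- Example 3.10.  If a finite set `Z` of idempotents covers the
idempotent `e`, then `{s⁻¹·z·s : z ∈ Z}` covers `s⁻¹·e·s`. -/
theorem statement10 {S : Type*} [InverseSemigroupWithZero S]
    (s e : S) (he : e * e = e)
    (Z : Finset S) (hZ : ∀ z ∈ Z, z * z = z)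
    (hcover : ∀ f : S, f * f = f → f = f * e → f ≠ 0 → ∃ z ∈ Z, f * z ≠ 0) :
    ∀ f : S, f * f = f → f = f * (s⁻¹ * e * s) → f ≠ 0 →
      ∃ z ∈ Z, f * (s⁻¹ * z * s) ≠ 0 := by
  intro f hf hfe hf0
  have hfs : f * (s⁻¹ * s) = f := mul_inv_mul_self_of_eq_mul_conj e s hfe
  have hg0 : s * f * s⁻¹ ≠ 0 := fun hg => hf0 <| by
    rw [← inv_conj_conj hf hfs, hg, InverseSemigroupWithZero.mul_zero,
      InverseSemigroupWithZero.zero_mul]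
  obtain ⟨z, hzZ, hgz⟩ := hcover (s * f * s⁻¹) (isIdempotentElem_conj hf s)
    (conj_eq_conj_mul_of_eq_mul_conj he hfe) hg0
  refine ⟨z, hzZ, fun hfz => hgz ?_⟩
  rw [conj_mul_eq_conj_mul_conj (hZ z hzZ), hfz, InverseSemigroupWithZero.mul_zero,
    InverseSemigroupWithZero.zero_mul]
end

section
/- Let S be an inverse semigroup with zero, let φ : E(S) → Bool be a core character of E(S), and let s ∈ S satisfy φ(s⁻¹·s) = true. Define s·φ : E(S) → Bool by (s·φ)(e) = φ(s⁻¹·e·s). Then s·φ is again a core character of E(S). (Proposition 4.7: \hat{E(S)}_{core} is invariant under the natural action of S.) -/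
namespace InverseSemigroupWithZero

variable {S : Type*} [InverseSemigroupWithZero S]

/-- The semilattice `E(S)` of idempotents of `S`. -/
def IdemE (S : Type*) [InverseSemigroupWithZero S] : Type _ :=
  {e : S // e * e = e}

theorem zero_idem : (0 : S) * 0 = 0 := mul_zero 0

theorem mul_idem {e f : S} (he : e * e = e) (hf : f * f = f) :
    (e * f) * (e * f) = e * f := by
  have hc : e * f = f * e := idem_comm e f he hf
  calc (e * f) * (e * f) = e * ((f * e) * f) := by rw [mul_assoc, ← mul_assoc f e f]
    _ = e * ((e * f) * f) := by rw [← hc]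
    _ = e * e * (f * f) := by rw [mul_assoc e f f, ← mul_assoc]
    _ = e * f := by rw [he, hf]

theorem rr_idem (s : S) : (s * s⁻¹) * (s * s⁻¹) = s * s⁻¹ := by
  rw [mul_assoc, ← mul_assoc s⁻¹ s s⁻¹, inv_mul_inv]

theorem dd_idem (s : S) : (s⁻¹ * s) * (s⁻¹ * s) = s⁻¹ * s := by
  rw [mul_assoc, ← mul_assoc s s⁻¹ s, mul_inv_mul]

theorem conj_idem (s : S) {e : S} (he : e * e = e) :
    (s⁻¹ * e * s) * (s⁻¹ * e * s) = s⁻¹ * e * s := by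
  have hc : e * (s * s⁻¹) = (s * s⁻¹) * e := idem_comm e (s * s⁻¹) he (rr_idem s)
  have key : e * (s * (s⁻¹ * (e * s))) = e * s := by
    rw [← mul_assoc s s⁻¹ (e * s), ← mul_assoc (s * s⁻¹) e s, ← hc,
      mul_assoc e (s * s⁻¹) s, mul_inv_mul, ← mul_assoc e e s, he]
  calc (s⁻¹ * e * s) * (s⁻¹ * e * s) = s⁻¹ * (e * (s * (s⁻¹ * (e * s)))) := by
        simp only [mul_assoc]
    _ = s⁻¹ * (e * s) := by rw [key]
    _ = s⁻¹ * e * s := by rw [← mul_assoc]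

/-- The meet `e ⊓ f = e·f` in `E(S)`. -/
def emul (e f : IdemE S) : IdemE S := ⟨e.1 * f.1, mul_idem e.2 f.2⟩

/-- The bottom element `0` of `E(S)`. -/
def ezero : IdemE S := ⟨0, zero_idem⟩

/-- Conjugation `e ↦ s⁻¹·e·s` on `E(S)`. -/
def econj (s : S) (e : IdemE S) : IdemE S := ⟨s⁻¹ * e.1 * s, conj_idem s e.2⟩

/-- A character of `E(S)`: a map `E(S) → Bool` sending `0` to `false`, preserving the
meet (= multiplication), and not identically false. -/
def IsChar (φ : IdemE S → Bool) : Prop :=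
  φ ezero = false ∧ (∀ e f : IdemE S, φ (emul e f) = (φ e && φ f)) ∧
    ∃ e : IdemE S, φ e = true

/-- `f` is dense in `e` (for idempotents `f ≤ e`): there is no nonzero idempotent
`d ≤ e` with `d·f = 0`. -/
def IsDenseIn (f e : IdemE S) : Prop :=
  f.1 = f.1 * e.1 ∧ ∀ d : IdemE S, d.1 = d.1 * e.1 → d.1 ≠ 0 → d.1 * f.1 ≠ 0

/-- A character of `E(S)` is core if `φ f = φ e` whenever `f ≤ e` and `f` is dense
in `e`. -/
def IsCoreChar (φ : IdemE S → Bool) : Prop :=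
  IsChar φ ∧ ∀ e f : IdemE S, IsDenseIn f e → φ f = φ e

theorem inv_mul_idem_mul_mul_inv (s : S) {e : S} (he : e * e = e) :
    s⁻¹ * e * s * s⁻¹ = s⁻¹ * e := by
  calc s⁻¹ * e * s * s⁻¹ = s⁻¹ * (e * (s * s⁻¹)) := by simp only [mul_assoc]
    _ = s⁻¹ * (s * s⁻¹ * e) := by rw [idem_comm e _ he (rr_idem s)]
    _ = s⁻¹ * e := by rw [← mul_assoc, ← mul_assoc, inv_mul_inv]

theorem conj_mul_conj (s : S) {e : S} (he : e * e = e) (f : S) :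
    (s⁻¹ * e * s) * (s⁻¹ * f * s) = s⁻¹ * (e * f) * s := by
  calc (s⁻¹ * e * s) * (s⁻¹ * f * s) = s⁻¹ * e * s * s⁻¹ * f * s := by simp only [mul_assoc]
    _ = s⁻¹ * (e * f) * s := by rw [inv_mul_idem_mul_mul_inv s he, mul_assoc s⁻¹ e f]

theorem conj_mul_inv_mul (s e : S) : s⁻¹ * e * s * (s⁻¹ * s) = s⁻¹ * e * s := by
  rw [mul_assoc (s⁻¹ * e), ← mul_assoc s, mul_inv_mul]

theorem mul_mul_inv_idem {s d : S} (hd : d * d = d) (hds : d * (s⁻¹ * s) = d) :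
    (s * d * s⁻¹) * (s * d * s⁻¹) = s * d * s⁻¹ := by
  calc (s * d * s⁻¹) * (s * d * s⁻¹) = s * (d * (s⁻¹ * s)) * d * s⁻¹ := by
        simp only [mul_assoc]
    _ = s * d * s⁻¹ := by rw [hds, mul_assoc s d d, hd]

theorem conj_mul_mul_inv {s d : S} (hd : d * d = d) (hds : d * (s⁻¹ * s) = d) :
    s⁻¹ * (s * d * s⁻¹) * s = d := by
  have hsd : s⁻¹ * s * d = d := (idem_comm d _ hd (dd_idem s)).symm.trans hds
  calc s⁻¹ * (s * d * s⁻¹) * s = s⁻¹ * s * d * (s⁻¹ * s) := by simp only [mul_assoc]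
    _ = d := by rw [hsd, hds]

theorem econj_ezero (s : S) : econj s ezero = ezero :=
  Subtype.ext (by show s⁻¹ * 0 * s = 0; rw [mul_zero, zero_mul])

theorem econj_emul (s : S) (e f : IdemE S) :
    econj s (emul e f) = emul (econj s e) (econj s f) :=
  Subtype.ext (conj_mul_conj s e.2 f.1).symm

theorem econj_mul_inv (s : S) : econj s ⟨s * s⁻¹, rr_idem s⟩ = ⟨s⁻¹ * s, dd_idem s⟩ :=
  Subtype.ext (by show s⁻¹ * (s * s⁻¹) * s = s⁻¹ * s; rw [← mul_assoc, inv_mul_inv])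

theorem IsChar.comp_econj {φ : IdemE S → Bool} (hφ : IsChar φ) {s : S}
    (hs : φ ⟨s⁻¹ * s, dd_idem s⟩ = true) : IsChar fun e : IdemE S => φ (econj s e) := by
  obtain ⟨h0, hmul, -⟩ := hφ
  exact ⟨(congrArg φ (econj_ezero s)).trans h0,
    fun e f => (congrArg φ (econj_emul s e f)).trans (hmul _ _),
    ⟨s * s⁻¹, rr_idem s⟩, (congrArg φ (econj_mul_inv s)).trans hs⟩

theorem IsDenseIn.econj {f e : IdemE S} (h : IsDenseIn f e) (s : S) :
    IsDenseIn (econj s f) (econj s e) := by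
  obtain ⟨hfe, hdense⟩ := h
  refine ⟨?_, fun d hde hd0 hdf => ?_⟩
  · show s⁻¹ * f.1 * s = (s⁻¹ * f.1 * s) * (s⁻¹ * e.1 * s)
    rw [conj_mul_conj s f.2, ← hfe]
  -- `d ≤ s⁻¹es ≤ s⁻¹s`, so `d` is the conjugate of `s d s⁻¹`, a nonzero idempotent below `e`
  -- orthogonal to `f`.
  change d.1 = d.1 * (s⁻¹ * e.1 * s) at hde
  change d.1 * (s⁻¹ * f.1 * s) = 0 at hdf
  have hds : d.1 * (s⁻¹ * s) = d.1 := by rw [hde, mul_assoc, conj_mul_inv_mul]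
  refine hdense ⟨s * d.1 * s⁻¹, mul_mul_inv_idem d.2 hds⟩ ?_ ?_ ?_
  · show s * d.1 * s⁻¹ = s * d.1 * s⁻¹ * e.1
    calc s * d.1 * s⁻¹ = s * (d.1 * (s⁻¹ * e.1 * s)) * s⁻¹ := by rw [← hde]
      _ = s * d.1 * (s⁻¹ * e.1 * s * s⁻¹) := by simp only [mul_assoc]
      _ = s * d.1 * s⁻¹ * e.1 := by rw [inv_mul_idem_mul_mul_inv s e.2, ← mul_assoc]
  · intro h
    apply hd0
    rw [← conj_mul_mul_inv d.2 hds, show s * d.1 * s⁻¹ = 0 from h, mul_zero, zero_mul]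
  · show s * d.1 * s⁻¹ * f.1 = 0
    calc s * d.1 * s⁻¹ * f.1 = s * d.1 * (s⁻¹ * f.1 * s * s⁻¹) := by
          rw [inv_mul_idem_mul_mul_inv s f.2, ← mul_assoc]
      _ = s * (d.1 * (s⁻¹ * f.1 * s)) * s⁻¹ := by simp only [mul_assoc]
      _ = 0 := by rw [hdf, mul_zero, zero_mul]

/-- Proposition 4.7.  The natural action of `S` preserves core
characters: if `φ` is a core character of `E(S)` and `φ (s⁻¹·s) = true`, then
`s·φ : e ↦ φ (s⁻¹·e·s)` is again a core character of `E(S)`. -/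
theorem statement13 (φ : IdemE S → Bool) (hcore : IsCoreChar φ)
    (s : S) (hs : φ ⟨s⁻¹ * s, dd_idem s⟩ = true) :
    IsCoreChar fun e : IdemE S => φ (econj s e) :=
  ⟨hcore.1.comp_econj hs, fun _ _ hfe => hcore.2 _ _ (hfe.econj s)⟩

end InverseSemigroupWithZero
end
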